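/- Let S and T be finite nonempty sets, let p : S × T → ℝ be a probability distribution (p ≥ 0, summing to 1), and let q : S × T → ℝ be a probability distribution with q(x,y) > 0 for all (x,y). With marginals p_X, p_Y, q_X, q_Y, cross-entropies H(p_X, q_X) = −Σ_x p_X(x) log q_X(x) and H(p_Y, q_Y) = −Σ_y p_Y(y) log q_Y(y), conditional cross-entropies H(p_{X∣Y}, q_{X∣Y}) = −Σ_{x,y} p(x,y) log (q(x,y)/q_Y(y)) and H(p_{Y∣X}, q_{Y∣X}) = −Σ_{x,y} p(x,y) log (q(x,y)/q_X(x)), and relative mutual information I_{p∥q}(X;Y) = D(p ∥ q_X ⊗ q_Y) − D(p ∥ q) where D denotes Kullback–Leibler divergence with convention 0·log 0 = 0, the following identity holds: H(p_X, q_X) + H(p_Y, q_Y) = H(p_{X∣Y}, q_{X∣Y}) + 2·I_{p∥q}(X;Y) + H(p_{Y∣X}, q_{Y∣X}). -/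
import Mathlib


/-- Symmetrized relative decomposition
`H(p_X, q_X) + H(p_Y, q_Y) = H(p_{X∣Y}, q_{X∣Y}) + 2·I_{p∥q}(X;Y) + H(p_{Y∣X}, q_{Y∣X})`,
where `I_{p∥q}(X;Y) = D(p ∥ q_X ⊗ q_Y) − D(p ∥ q)`. The convention `0·log 0 = 0`
holds automatically since `Real.log 0 = 0`. -/
theorem cross_entropy_decomposition_symm {S T : Type*} [Fintype S] [Fintype T]
    [Nonempty S] [Nonempty T]
    (p : S × T → ℝ) (hp : ∀ z, 0 ≤ p z) (hp1 : ∑ z : S × T, p z = 1)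
    (q : S × T → ℝ) (hq : ∀ z, 0 < q z) (hq1 : ∑ z : S × T, q z = 1)
    (pX : S → ℝ) (hpX : ∀ x, pX x = ∑ y : T, p (x, y))
    (pY : T → ℝ) (hpY : ∀ y, pY y = ∑ x : S, p (x, y))
    (qX : S → ℝ) (hqX : ∀ x, qX x = ∑ y : T, q (x, y))
    (qY : T → ℝ) (hqY : ∀ y, qY y = ∑ x : S, q (x, y)) :
    (-∑ x : S, pX x * Real.log (qX x)) + (-∑ y : T, pY y * Real.log (qY y)) =
      (-∑ x : S, ∑ y : T, p (x, y) * Real.log (q (x, y) / qY y))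
        + 2 * ((∑ x : S, ∑ y : T, p (x, y) * Real.log (p (x, y) / (qX x * qY y)))
            - ∑ x : S, ∑ y : T, p (x, y) * Real.log (p (x, y) / q (x, y)))
        + (-∑ x : S, ∑ y : T, p (x, y) * Real.log (q (x, y) / qX x)) := by
  have hqX0 : ∀ x, 0 < qX x := fun x => by
    rw [hqX]; exact Finset.sum_pos (fun y _ => hq _) Finset.univ_nonempty
  have hqY0 : ∀ y, 0 < qY y := fun y => by
    rw [hqY]; exact Finset.sum_pos (fun x _ => hq _) Finset.univ_nonempty
  have e1 : ∑ x : S, pX x * Real.log (qX x)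
      = ∑ x : S, ∑ y : T, p (x, y) * Real.log (qX x) := by
    refine Finset.sum_congr rfl fun x _ => ?_
    rw [hpX, Finset.sum_mul]
  have e2 : ∑ y : T, pY y * Real.log (qY y)
      = ∑ y : T, ∑ x : S, p (x, y) * Real.log (qY y) := by
    refine Finset.sum_congr rfl fun y _ => ?_
    rw [hpY, Finset.sum_mul]
  have e2' : ∑ y : T, ∑ x : S, p (x, y) * Real.log (qY y)
      = ∑ x : S, ∑ y : T, p (x, y) * Real.log (qY y) := Finset.sum_comm
  have e3 : ∑ x : S, ∑ y : T, p (x, y) * Real.log (q (x, y) / qY y)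
      = ∑ x : S, ∑ y : T, (p (x, y) * Real.log (q (x, y)) - p (x, y) * Real.log (qY y)) := by
    refine Finset.sum_congr rfl fun x _ => Finset.sum_congr rfl fun y _ => ?_
    rw [Real.log_div (hq _).ne' (hqY0 y).ne', mul_sub]
  have e4 : ∑ x : S, ∑ y : T, p (x, y) * Real.log (q (x, y) / qX x)
      = ∑ x : S, ∑ y : T, (p (x, y) * Real.log (q (x, y)) - p (x, y) * Real.log (qX x)) := by
    refine Finset.sum_congr rfl fun x _ => Finset.sum_congr rfl fun y _ => ?_
    rw [Real.log_div (hq _).ne' (hqX0 x).ne', mul_sub]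
  have e5 : (∑ x : S, ∑ y : T, p (x, y) * Real.log (p (x, y) / (qX x * qY y)))
        - ∑ x : S, ∑ y : T, p (x, y) * Real.log (p (x, y) / q (x, y))
      = ∑ x : S, ∑ y : T, (p (x, y) * Real.log (q (x, y))
          - p (x, y) * Real.log (qX x) - p (x, y) * Real.log (qY y)) := by
    rw [← Finset.sum_sub_distrib]
    refine Finset.sum_congr rfl fun x _ => ?_
    rw [← Finset.sum_sub_distrib]
    refine Finset.sum_congr rfl fun y _ => ?_
    rcases eq_or_lt_of_le (hp (x, y)) with h | h
    · simp [← h]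
    · rw [Real.log_div h.ne' (mul_pos (hqX0 x) (hqY0 y)).ne',
        Real.log_div h.ne' (hq _).ne', Real.log_mul (hqX0 x).ne' (hqY0 y).ne']
      ring
  rw [e1, e2, e2', e3, e4, e5]
  simp only [Finset.sum_sub_distrib]
  ring
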